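/- arXiv:1201.5360 — 3 statements merged into one kernel-verified Lean document; each statement's English description precedes it below -/
import Mathlib

section
/- Let μ be the Gaussian measure on ℝ with mean m and variance σ² > 0, let K ⊆ ℝ be a compact set, and let (A_k)_{k≥1} be a sequence of Borel subsets of ℝ with A_{k+1} ⊆ A_k for all k and ⋂_{k≥1} A_k = ∅. Then lim_{k→∞} sup_{z ∈ K} μ({x : x + z ∈ A_k}) = 0; i.e., the family of translates of a Gaussian measure by elements of a compact set is uniformly countably additive. -/
/-!
Translating by `z` turns `N(m, v)` into `N(m + z, v)`, and completing the square shows that the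
density of `N(m + z, v)` is at most `√2 · exp (z² / 2v)` times the density of `N(m, 2v)`. On the
compact set `K` this factor is bounded, so all the translates are dominated by one multiple of the
single finite measure `N(m, 2v)`, whose values on the decreasing sets `A k` tend to `0` by
continuity from above.
-/

open MeasureTheory ProbabilityTheory Filter Real Topology
open scoped NNReal ENNReal

theorem tendsto_biSup_measure_of_le_smul {α ι : Type*} [MeasurableSpace α] {μ : ι → Measure α}
    {ν : Measure α} [IsFiniteMeasure ν] {s : Set ι} {c : ℝ≥0∞} (hc : c ≠ ∞)
    (hμ : ∀ i ∈ s, μ i ≤ c • ν) {A : ℕ → Set α} (hA : ∀ k, NullMeasurableSet (A k) ν)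
    (hanti : Antitone A) (hempty : ⋂ k, A k = ∅) :
    Tendsto (fun k => ⨆ i ∈ s, μ i (A k)) atTop (𝓝 0) := by
  have hν : Tendsto (fun k => ν (A k)) atTop (𝓝 0) := by
    simpa [hempty, Function.comp_def] using
      tendsto_measure_iInter_atTop hA hanti ⟨0, measure_ne_top ν (A 0)⟩
  have hcν : Tendsto (fun k => c * ν (A k)) atTop (𝓝 0) := by
    simpa using ENNReal.Tendsto.const_mul hν (Or.inr hc)
  exact tendsto_of_tendsto_of_tendsto_of_le_of_le tendsto_const_nhds hcν (fun _ => zero_le)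
    fun k => iSup₂_le fun i hi => hμ i hi (A k)

lemma gaussianPDFReal_add_mean_le (m z y : ℝ) {v : ℝ≥0} (hv : v ≠ 0) :
    gaussianPDFReal (m + z) v y
      ≤ √2 * exp (z ^ 2 / (2 * v)) * gaussianPDFReal m (2 * v) y := by
  have hv' : (0 : ℝ) < v := by positivity
  -- with `u = y - m`, this is `-(u - z)² / 2 ≤ z² / 2 - u² / 4`, i.e. `0 ≤ (u - 2z)²`
  have hexp : -(y - (m + z)) ^ 2 / (2 * v)
      ≤ z ^ 2 / (2 * v) + -(y - m) ^ 2 / (2 * (2 * v)) := by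
    rw [div_add_div _ _ (by positivity) (by positivity),
      div_le_div_iff₀ (by positivity) (by positivity)]
    nlinarith [mul_nonneg (sq_nonneg (y - m - 2 * z)) (by positivity : (0 : ℝ) ≤ 4 * v ^ 2)]
  have hsqrt : √(2 * π * (2 * v)) = √2 * √(2 * π * v) := by
    rw [← sqrt_mul zero_le_two]
    ring_nf
  calc gaussianPDFReal (m + z) v y
      ≤ (√(2 * π * v))⁻¹ * exp (z ^ 2 / (2 * v) + -(y - m) ^ 2 / (2 * (2 * v))) := by
        unfold gaussianPDFReal
        gcongr
    _ = √2 * exp (z ^ 2 / (2 * v)) * gaussianPDFReal m (2 * v) y := by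
        simp only [gaussianPDFReal, NNReal.coe_mul, NNReal.coe_ofNat, hsqrt, exp_add]
        field_simp

lemma gaussianReal_add_mean_le_smul (m z : ℝ) {v : ℝ≥0} (hv : v ≠ 0) :
    gaussianReal (m + z) v
      ≤ ENNReal.ofReal (√2 * exp (z ^ 2 / (2 * v))) • gaussianReal m (2 * v) := by
  rw [gaussianReal_of_var_ne_zero _ hv, gaussianReal_of_var_ne_zero _ (mul_ne_zero two_ne_zero hv),
    ← withDensity_smul' _ _ ENNReal.ofReal_ne_top]
  refine withDensity_mono (ae_of_all _ fun y => ?_)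
  simp only [gaussianPDF, Pi.smul_apply, smul_eq_mul]
  rw [← ENNReal.ofReal_mul (by positivity)]
  exact ENNReal.ofReal_le_ofReal (gaussianPDFReal_add_mean_le m z y hv)

lemma gaussianReal_setOf_add_mem (m z : ℝ) (v : ℝ≥0) {A : Set ℝ} (hA : MeasurableSet A) :
    gaussianReal m v {x | x + z ∈ A} = gaussianReal (m + z) v A := by
  rw [← gaussianReal_map_add_const, Measure.map_apply (measurable_add_const z) hA]
  rfl

/-- Uniform countable additivity of Gaussian translates: for a Gaussian measure `μ` on `ℝ`,
a compact set `K`, and a decreasing sequence of Borel sets `A_k` with empty intersection,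
`sup_{z ∈ K} μ {x : x + z ∈ A_k} → 0`. -/
theorem stmt_7 (m σ : ℝ) (hσ : 0 < σ) (K : Set ℝ) (hK : IsCompact K)
    (A : ℕ → Set ℝ) (hA : ∀ k, MeasurableSet (A k)) (hanti : Antitone A)
    (hempty : ⋂ k, A k = ∅) :
    Tendsto (fun k => ⨆ z ∈ K, gaussianReal m (σ ^ 2).toNNReal {x | x + z ∈ A k})
      atTop (nhds 0) := by
  set v := (σ ^ 2).toNNReal
  have hv : v ≠ 0 := (Real.toNNReal_pos.mpr (by positivity)).ne'
  obtain ⟨C, hC⟩ := hK.bddAbove_image (f := fun z => exp (z ^ 2 / (2 * v))) (by fun_prop)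
  simp only [gaussianReal_setOf_add_mem, hA]
  refine tendsto_biSup_measure_of_le_smul (ν := gaussianReal m (2 * v))
    (ENNReal.ofReal_ne_top (r := √2 * C)) (fun z hz => ?_) (fun k => (hA k).nullMeasurableSet)
    hanti hempty
  calc gaussianReal (m + z) v
      ≤ ENNReal.ofReal (√2 * exp (z ^ 2 / (2 * v))) • gaussianReal m (2 * v) :=
        gaussianReal_add_mean_le_smul m z hv
    _ ≤ ENNReal.ofReal (√2 * C) • gaussianReal m (2 * v) := by
        gcongr
        exact hC ⟨z, hz, rfl⟩
end

section
/- Let (Ω, ℱ, P) be a probability space with a filtration (ℱ_z)_{z∈ℕ}, let (V_z)_{z∈ℕ} be a sequence of nonnegative integrable random variables with V_z measurable with respect to ℱ_z, let b ≥ 0, and let (G_z)_{z∈ℕ} be events with G_z ∈ ℱ_z. Suppose that for every z ≥ 0, E[V_{z+1} | ℱ_z] ≤ V_z − 1 + b·1_{G_z} almost surely. Define σ = inf{z ≥ 1 : ω ∈ G_z} (with σ = ∞ if no such z exists). Then E[σ] ≤ E[V_0] + b; in particular σ < ∞ almost surely. -/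
/-!
Let `A n` be the event that `ω` has not entered any `G j` with `1 ≤ j ≤ n`, i.e. `σ > n`;
it is `ℱ n`-measurable and `σ ≤ ∑ₙ 1_{A n}`. Integrating the drift inequality over `A n` gives
`∫_{A (n+1)} V (n+1) + P (A n) ≤ ∫_{A n} V n + b · P (A n ∩ G n)`, and `A n ∩ G n = ∅` for
`n ≥ 1`. Telescoping, `∑ₙ P (A n) ≤ E[V 0] + b`, which bounds `E[σ]`.
-/

open MeasureTheory Filter Finset
open scoped ENNReal

namespace FosterLyapunov

variable {Ω : Type*} {mΩ : MeasurableSpace Ω} {G : ℕ → Set Ω}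

noncomputable def firstEntryTime (G : ℕ → Set Ω) (ω : Ω) : ℝ≥0∞ :=
  ⨅ (z : ℕ) (_ : 1 ≤ z ∧ ω ∈ G z), (z : ℝ≥0∞)

def noEntryUntil (G : ℕ → Set Ω) (n : ℕ) : Set Ω :=
  {ω | ∀ j, 1 ≤ j → j ≤ n → ω ∉ G j}

theorem noEntryUntil_zero : noEntryUntil G 0 = Set.univ :=
  Set.eq_univ_of_forall fun _ j h1 h2 => absurd (h1.trans h2) (by norm_num)

theorem antitone_noEntryUntil : Antitone (noEntryUntil G) :=
  fun _ _ hmn _ h j h1 h2 => h j h1 (h2.trans hmn)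

theorem disjoint_noEntryUntil_self {n : ℕ} (hn : 1 ≤ n) : Disjoint (noEntryUntil G n) (G n) :=
  Set.disjoint_left.mpr fun _ h => h n hn le_rfl

theorem measurableSet_noEntryUntil {ℱ : Filtration ℕ mΩ} (hG : ∀ z, MeasurableSet[ℱ z] (G z))
    (n : ℕ) : MeasurableSet[ℱ n] (noEntryUntil G n) := by
  simp only [noEntryUntil, Set.ofPred_forall]
  exact .iInter fun j => .iInter fun _ => .iInter fun hj => (ℱ.mono hj _ (hG j)).compl

theorem firstEntryTime_le_tsum_indicator (ω : Ω) :
    firstEntryTime G ω ≤ ∑' k, (noEntryUntil G k).indicator 1 ω := by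
  classical
  by_cases h : ∃ z, 1 ≤ z ∧ ω ∈ G z
  · have hmem : ∀ k < Nat.find h, ω ∈ noEntryUntil G k := fun k hk j h1 h2 hGj =>
      Nat.find_min h (h2.trans_lt hk) ⟨h1, hGj⟩
    calc firstEntryTime G ω ≤ (Nat.find h : ℝ≥0∞) := biInf_le _ (Nat.find_spec h)
      _ = ∑ k ∈ range (Nat.find h), (noEntryUntil G k).indicator 1 ω := by
        rw [sum_congr rfl fun k hk => Set.indicator_of_mem (hmem k (mem_range.mp hk)) _]
        simp
      _ ≤ _ := ENNReal.sum_le_tsum _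
  · have hmem : ∀ k, (noEntryUntil G k).indicator (1 : Ω → ℝ≥0∞) ω = 1 := fun k =>
      Set.indicator_of_mem (show ω ∈ noEntryUntil G k from fun j h1 _ hGj => h ⟨j, h1, hGj⟩) _
    simp [hmem]

variable {P : Measure Ω}

theorem lintegral_tsum_indicator_noEntryUntil (hA : ∀ n, MeasurableSet (noEntryUntil G n)) :
    ∫⁻ ω, ∑' k, (noEntryUntil G k).indicator 1 ω ∂P = ∑' k, P (noEntryUntil G k) := by
  rw [lintegral_tsum fun k => (measurable_one.indicator (hA k)).aemeasurable]
  simp [lintegral_indicator_one (hA _)]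

theorem lintegral_firstEntryTime_le (hA : ∀ n, MeasurableSet (noEntryUntil G n)) :
    ∫⁻ ω, firstEntryTime G ω ∂P ≤ ∑' k, P (noEntryUntil G k) :=
  (lintegral_mono firstEntryTime_le_tsum_indicator).trans_eq
    (lintegral_tsum_indicator_noEntryUntil hA)

theorem ae_firstEntryTime_lt_top (hA : ∀ n, MeasurableSet (noEntryUntil G n))
    (hfin : ∑' k, P (noEntryUntil G k) ≠ ∞) : ∀ᵐ ω ∂P, firstEntryTime G ω < ⊤ := by
  have hmeas : Measurable fun ω => ∑' k, (noEntryUntil G k).indicator (1 : Ω → ℝ≥0∞) ω :=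
    .tsum fun k => measurable_one.indicator (hA k)
  filter_upwards [ae_lt_top hmeas ((lintegral_tsum_indicator_noEntryUntil hA).trans_ne hfin)]
    with ω hω using (firstEntryTime_le_tsum_indicator ω).trans_lt hω

theorem sum_range_le_of_drift {a p : ℕ → ℝ} {c : ℝ} (ha : ∀ n, 0 ≤ a n) (hc : 0 ≤ c)
    (h₀ : a 1 + p 0 ≤ a 0 + c) (hstep : ∀ n, 1 ≤ n → a (n + 1) + p n ≤ a n) (N : ℕ) :
    ∑ k ∈ range N, p k ≤ a 0 + c := by
  suffices ∀ N, ∑ k ∈ range N, p k + a N ≤ a 0 + c by linarith [this N, ha N]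
  intro N
  induction N with
  | zero => simpa using hc
  | succ n ih =>
    rw [sum_range_succ]
    rcases Nat.eq_zero_or_pos n with rfl | hn
    · simpa [add_comm] using h₀
    · linarith [hstep n hn]

theorem setIntegral_add_measureReal_le_of_condExp_le [IsFiniteMeasure P] {f g : Ω → ℝ} {b : ℝ}
    {B A : Set Ω} (hf : Integrable f P) (hg : Integrable g P) (hB : MeasurableSet B)
    {m : MeasurableSpace Ω} (hm : m ≤ mΩ)
    (hdrift : P[g | m] ≤ᵐ[P] fun ω => f ω - 1 + b * B.indicator (fun _ => (1 : ℝ)) ω)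
    (hA : MeasurableSet[m] A) :
    ∫ ω in A, g ω ∂P + P.real A ≤ ∫ ω in A, f ω ∂P + b * P.real (A ∩ B) := by
  have hind : Integrable (B.indicator fun _ => (1 : ℝ)) P := (integrable_const 1).indicator hB
  calc ∫ ω in A, g ω ∂P + P.real A = ∫ ω in A, (P[g | m]) ω ∂P + P.real A := by
        rw [setIntegral_condExp hm hg hA]
    _ ≤ ∫ ω in A, (f ω - 1 + b * B.indicator (fun _ => (1 : ℝ)) ω) ∂P + P.real A := by
        gcongr ?_ + _
        exact setIntegral_mono_ae integrable_condExp.integrableOn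
          ((hf.sub (integrable_const 1)).add (hind.const_mul b)).integrableOn hdrift
    _ = ∫ ω in A, f ω ∂P + b * P.real (A ∩ B) := by
        rw [integral_add (f := fun ω => f ω - 1) (hf.sub (integrable_const 1)).integrableOn
          (hind.const_mul b).integrableOn,
          integral_sub hf.integrableOn (integrable_const 1).integrableOn, integral_const_mul,
          setIntegral_indicator hB]
        simp only [integral_const, MeasurableSet.univ, measureReal_restrict_apply, Set.univ_inter,
          smul_eq_mul, mul_one]
        ring

theorem tsum_measure_le_ofReal_of_sum_range_le [IsFiniteMeasure P] {s : ℕ → Set Ω} {c : ℝ}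
    (h : ∀ N, ∑ k ∈ range N, P.real (s k) ≤ c) : ∑' k, P (s k) ≤ ENNReal.ofReal c :=
  ENNReal.tsum_le_of_sum_range_le fun N => (ENNReal.ofReal_le_ofReal (h N)).trans_eq' <| by
    rw [ENNReal.ofReal_sum_of_nonneg fun _ _ => measureReal_nonneg]
    simp [ofReal_measureReal]

theorem sum_range_measureReal_noEntryUntil_le [IsProbabilityMeasure P] {ℱ : Filtration ℕ mΩ}
    {V : ℕ → Ω → ℝ} {b : ℝ} (hb : 0 ≤ b) (hG : ∀ z, MeasurableSet[ℱ z] (G z))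
    (hVnonneg : ∀ z ω, 0 ≤ V z ω) (hVint : ∀ z, Integrable (V z) P)
    (hdrift : ∀ z, P[V (z + 1) | ℱ z]
        ≤ᵐ[P] fun ω => V z ω - 1 + b * (G z).indicator (fun _ => (1 : ℝ)) ω) (N : ℕ) :
    ∑ k ∈ range N, P.real (noEntryUntil G k) ≤ ∫ ω, V 0 ω ∂P + b := by
  set A := noEntryUntil G
  have hA n : MeasurableSet (A n) := ℱ.le n _ (measurableSet_noEntryUntil hG n)
  have hstep n : ∫ ω in A (n + 1), V (n + 1) ω ∂P + P.real (A n)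
      ≤ ∫ ω in A n, V n ω ∂P + b * P.real (A n ∩ G n) :=
    (add_le_add_left (setIntegral_mono_set (hVint _).integrableOn (ae_of_all _ (hVnonneg _))
        (antitone_noEntryUntil n.le_succ).eventuallyLE) _).trans
      (setIntegral_add_measureReal_le_of_condExp_le (hVint n) (hVint _) (ℱ.le n _ (hG n))
        (ℱ.le n) (hdrift n) (measurableSet_noEntryUntil hG n))
  have h := sum_range_le_of_drift (a := fun n => ∫ ω in A n, V n ω ∂P)
    (fun n => setIntegral_nonneg (hA n) fun ω _ => hVnonneg n ω) hb
    ((hstep 0).trans (by gcongr; exact mul_le_of_le_one_right hb measureReal_le_one))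
    (fun n hn => (hstep n).trans_eq <| by
      simp [show A n ∩ G n = ∅ from (disjoint_noEntryUntil_self hn).inter_eq])
    N
  simpa [A, noEntryUntil_zero] using h

end FosterLyapunov

open FosterLyapunov

theorem stmt_8_general {Ω : Type*} {mΩ : MeasurableSpace Ω} (P : Measure Ω) [IsProbabilityMeasure P]
    (ℱ : Filtration ℕ mΩ) (V : ℕ → Ω → ℝ) (b : ℝ) (hb : 0 ≤ b)
    (G : ℕ → Set Ω) (hG : ∀ z, MeasurableSet[ℱ z] (G z))
    (hVnonneg : ∀ z ω, 0 ≤ V z ω)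
    (hVint : ∀ z, Integrable (V z) P)
    (hdrift : ∀ z, P[V (z + 1) | ℱ z]
        ≤ᵐ[P] fun ω => V z ω - 1 + b * (G z).indicator (fun _ => (1 : ℝ)) ω) :
    (∫⁻ ω, ⨅ (z : ℕ) (_ : 1 ≤ z ∧ ω ∈ G z), (z : ℝ≥0∞) ∂P)
        ≤ ENNReal.ofReal (∫ ω, V 0 ω ∂P) + ENNReal.ofReal b ∧
      ∀ᵐ ω ∂P, (⨅ (z : ℕ) (_ : 1 ≤ z ∧ ω ∈ G z), (z : ℝ≥0∞)) < ⊤ := by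
  have hA n : MeasurableSet (noEntryUntil G n) := ℱ.le n _ (measurableSet_noEntryUntil hG n)
  have hsum : ∑' k, P (noEntryUntil G k) ≤ ENNReal.ofReal (∫ ω, V 0 ω ∂P) + ENNReal.ofReal b := by
    rw [← ENNReal.ofReal_add (integral_nonneg (hVnonneg 0)) hb]
    exact tsum_measure_le_ofReal_of_sum_range_le
      (sum_range_measureReal_noEntryUntil_le hb hG hVnonneg hVint hdrift)
  exact ⟨(lintegral_firstEntryTime_le hA).trans hsum,
    ae_firstEntryTime_lt_top hA (ne_top_of_le_ne_top (by finiteness) hsum)⟩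

/-- Foster–Lyapunov drift towards a sequence of events: if
`E[V_{z+1} | ℱ_z] ≤ V_z − 1 + b·1_{G_z}` a.s. for all `z`, then the first entrance time
`σ = inf{z ≥ 1 : ω ∈ G_z}` satisfies `E[σ] ≤ E[V₀] + b`; in particular `σ < ∞` a.s. -/
theorem stmt_8 {Ω : Type*} {mΩ : MeasurableSpace Ω} (P : Measure Ω) [IsProbabilityMeasure P]
    (ℱ : Filtration ℕ mΩ) (V : ℕ → Ω → ℝ) (b : ℝ) (hb : 0 ≤ b)
    (G : ℕ → Set Ω) (hG : ∀ z, MeasurableSet[ℱ z] (G z))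
    (hVnonneg : ∀ z ω, 0 ≤ V z ω)
    (hVint : ∀ z, Integrable (V z) P)
    (hVadapted : ∀ z, StronglyMeasurable[ℱ z] (V z))
    (hdrift : ∀ z, P[V (z + 1) | ℱ z]
        ≤ᵐ[P] fun ω => V z ω - 1 + b * (G z).indicator (fun _ => (1 : ℝ)) ω) :
    (∫⁻ ω, ⨅ (z : ℕ) (_ : 1 ≤ z ∧ ω ∈ G z), (z : ℝ≥0∞) ∂P)
        ≤ ENNReal.ofReal (∫ ω, V 0 ω ∂P) + ENNReal.ofReal b ∧
      ∀ᵐ ω ∂P, (⨅ (z : ℕ) (_ : 1 ≤ z ∧ ω ∈ G z), (z : ℝ≥0∞)) < ⊤ :=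
  stmt_8_general P ℱ V b hb G hG hVnonneg hVint hdrift
end

section
/- Let (Ω, ℱ, P) be a probability space with a filtration (ℱ_t)_{t∈ℕ}, and let T_0 = 0 ≤ T_1 ≤ T_2 ≤ … be stopping times for this filtration that are finite almost surely. Let (f_t)_{t∈ℕ} be a sequence of nonnegative random variables with f_t measurable with respect to ℱ_t; let (v_z)_{z∈ℕ} and (δ_z)_{z∈ℕ} be sequences of nonnegative integrable random variables measurable with respect to the stopped σ-algebras ℱ_{T_z}; let b ≥ 0 and let (G_z)_{z∈ℕ} be events with G_z ∈ ℱ_{T_z}. Suppose for every z ≥ 0, almost surely, E[v_{z+1} | ℱ_{T_z}] ≤ v_z − δ_z + b·1_{G_z} and E[Σ_{k=T_z}^{T_{z+1}−1} f_k | ℱ_{T_z}] ≤ δ_z. Then for every Z ≥ 1, E[Σ_{k=0}^{T_Z−1} f_k] ≤ E[v_0] + b·Σ_{z=0}^{Z−1} P(G_z) ≤ E[v_0] + b·Z. -/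
open MeasureTheory Filter
open scoped ENNReal

/-!
The sum `∑_{k < T_Z} f_k` splits into the blocks `∑_{T_z ≤ k < T_{z+1}} f_k`, `z < Z`. Integrating the
two conditional drift inequalities, chained through `δ_z`, bounds the expectation of the `z`-th block
by `E[v_z] - E[v_{z+1}] + b P(G_z)`; these bounds telescope, and `E[v_Z] ≥ 0` is dropped.
-/

@[to_additive]
theorem Finset.prod_range_eq_prod_range_prod_Ico {M : Type*} [CommMonoid M] (g : ℕ → M)
    {T : ℕ → ℕ} (hT0 : T 0 = 0) (hT : ∀ z, T z ≤ T (z + 1)) (n : ℕ) :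
    ∏ k ∈ range (T n), g k = ∏ z ∈ range n, ∏ k ∈ Ico (T z) (T (z + 1)), g k := by
  induction n with
  | zero => simp [hT0]
  | succ n ih => rw [prod_range_succ, ← ih, prod_range_mul_prod_Ico g (hT n)]

theorem integral_le_of_condExp_le_of_condExp_drift {Ω : Type*} {m mΩ : MeasurableSpace Ω}
    {μ : Measure Ω} (hm : m ≤ mΩ) [SigmaFinite (μ.trim hm)] {X D V V' W : Ω → ℝ}
    (hV : Integrable V μ) (hW : Integrable W μ)
    (hX : μ[X | m] ≤ᵐ[μ] D) (hdrift : μ[V' | m] ≤ᵐ[μ] fun ω => V ω - D ω + W ω) :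
    ∫ ω, X ω ∂μ ≤ ∫ ω, V ω ∂μ - ∫ ω, V' ω ∂μ + ∫ ω, W ω ∂μ := by
  have hX' : μ[X | m] ≤ᵐ[μ] fun ω => V ω - (μ[V' | m]) ω + W ω := by
    filter_upwards [hX, hdrift] with ω hXω hdriftω
    linarith
  calc ∫ ω, X ω ∂μ = ∫ ω, (μ[X | m]) ω ∂μ := (integral_condExp hm).symm
    _ ≤ ∫ ω, V ω - (μ[V' | m]) ω + W ω ∂μ :=
      integral_mono_ae integrable_condExp ((hV.sub integrable_condExp).add hW) hX'
    _ = ∫ ω, V ω ∂μ - ∫ ω, V' ω ∂μ + ∫ ω, W ω ∂μ := by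
      rw [integral_add (f := fun ω => V ω - (μ[V' | m]) ω) (hV.sub integrable_condExp) hW,
        integral_sub hV integrable_condExp, integral_condExp hm]

theorem stmt_9_general {Ω : Type*} {mΩ : MeasurableSpace Ω} (P : Measure Ω) [IsProbabilityMeasure P]
    (ℱ : Filtration ℕ mΩ) (T : ℕ → Ω → ℕ)
    (hT : ∀ z, IsStoppingTime ℱ (fun ω => (T z ω : WithTop ℕ)))
    (hT0 : ∀ ω, T 0 ω = 0) (hTmono : ∀ z ω, T z ω ≤ T (z + 1) ω)
    (f : ℕ → Ω → ℝ)
    (v δ : ℕ → Ω → ℝ)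
    (hvnonneg : ∀ z ω, 0 ≤ v z ω)
    (hvint : ∀ z, Integrable (v z) P)
    (b : ℝ) (hb : 0 ≤ b)
    (G : ℕ → Set Ω) (hG : ∀ z, MeasurableSet[(hT z).measurableSpace] (G z))
    (hdrift : ∀ z, P[v (z + 1) | (hT z).measurableSpace]
        ≤ᵐ[P] fun ω => v z ω - δ z ω + b * (G z).indicator (fun _ => (1 : ℝ)) ω)
    (hsumint : ∀ z, Integrable (fun ω => ∑ k ∈ Finset.Ico (T z ω) (T (z + 1) ω), f k ω) P)
    (hfdrift : ∀ z,
      P[(fun ω => ∑ k ∈ Finset.Ico (T z ω) (T (z + 1) ω), f k ω) | (hT z).measurableSpace]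
        ≤ᵐ[P] δ z) :
    ∀ Z : ℕ, 1 ≤ Z →
      (∫ ω, ∑ k ∈ Finset.range (T Z ω), f k ω ∂P)
          ≤ (∫ ω, v 0 ω ∂P) + b * ∑ z ∈ Finset.range Z, (P (G z)).toReal ∧
        (∫ ω, v 0 ω ∂P) + b * ∑ z ∈ Finset.range Z, (P (G z)).toReal
          ≤ (∫ ω, v 0 ω ∂P) + b * Z := by
  intro Z _
  have hblock : ∀ z, ∫ ω, ∑ k ∈ Finset.Ico (T z ω) (T (z + 1) ω), f k ω ∂P
      ≤ ∫ ω, v z ω ∂P - ∫ ω, v (z + 1) ω ∂P + b * P.real (G z) := by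
    intro z
    have hGmeas := (hT z).measurableSpace_le _ (hG z)
    have h := integral_le_of_condExp_le_of_condExp_drift (hT z).measurableSpace_le (hvint z)
      (((integrable_const (1 : ℝ)).indicator hGmeas).const_mul b)
      (hfdrift z) (hdrift z)
    rwa [integral_const_mul, ← Pi.one_def, integral_indicator_one hGmeas] at h
  have hprob : ∑ z ∈ Finset.range Z, P.real (G z) ≤ Z := by
    simpa using Finset.sum_le_card_nsmul (Finset.range Z) _ 1 fun z _ =>
      measureReal_le_one (μ := P) (s := G z)
  refine ⟨?_, by gcongr; exact hprob⟩
  calc ∫ ω, ∑ k ∈ Finset.range (T Z ω), f k ω ∂P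
      = ∑ z ∈ Finset.range Z, ∫ ω, ∑ k ∈ Finset.Ico (T z ω) (T (z + 1) ω), f k ω ∂P := by
        simp_rw [Finset.sum_range_eq_sum_range_sum_Ico _ (hT0 _) (hTmono · _)]
        exact integral_finsetSum _ fun z _ => hsumint z
    _ ≤ ∑ z ∈ Finset.range Z, (∫ ω, v z ω ∂P - ∫ ω, v (z + 1) ω ∂P + b * P.real (G z)) :=
        Finset.sum_le_sum fun z _ => hblock z
    _ = ∫ ω, v 0 ω ∂P - ∫ ω, v Z ω ∂P + b * ∑ z ∈ Finset.range Z, P.real (G z) := by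
        rw [Finset.sum_add_distrib, Finset.sum_range_sub', Finset.mul_sum]
    _ ≤ ∫ ω, v 0 ω ∂P + b * ∑ z ∈ Finset.range Z, P.real (G z) := by
        linarith [integral_nonneg (μ := P) (f := v Z) (hvnonneg Z)]

/-- Random-time state-dependent drift (Yüksel–Meyn): along a.s.-finite stopping times
`0 = T₀ ≤ T₁ ≤ …`, if `E[v_{z+1} | ℱ_{T_z}] ≤ v_z − δ_z + b·1_{G_z}` and
`E[∑_{k=T_z}^{T_{z+1}−1} f_k | ℱ_{T_z}] ≤ δ_z`, then for every `Z ≥ 1`,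
`E[∑_{k<T_Z} f_k] ≤ E[v₀] + b ∑_{z<Z} P(G_z) ≤ E[v₀] + b Z`. -/
theorem stmt_9 {Ω : Type*} {mΩ : MeasurableSpace Ω} (P : Measure Ω) [IsProbabilityMeasure P]
    (ℱ : Filtration ℕ mΩ) (T : ℕ → Ω → ℕ)
    (hT : ∀ z, IsStoppingTime ℱ (fun ω => (T z ω : WithTop ℕ)))
    (hT0 : ∀ ω, T 0 ω = 0) (hTmono : ∀ z ω, T z ω ≤ T (z + 1) ω)
    (f : ℕ → Ω → ℝ) (hfnonneg : ∀ t ω, 0 ≤ f t ω)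
    (hfadapted : ∀ t, StronglyMeasurable[ℱ t] (f t))
    (v δ : ℕ → Ω → ℝ)
    (hvnonneg : ∀ z ω, 0 ≤ v z ω) (hδnonneg : ∀ z ω, 0 ≤ δ z ω)
    (hvint : ∀ z, Integrable (v z) P) (hδint : ∀ z, Integrable (δ z) P)
    (hvmeas : ∀ z, StronglyMeasurable[(hT z).measurableSpace] (v z))
    (hδmeas : ∀ z, StronglyMeasurable[(hT z).measurableSpace] (δ z))
    (b : ℝ) (hb : 0 ≤ b)
    (G : ℕ → Set Ω) (hG : ∀ z, MeasurableSet[(hT z).measurableSpace] (G z))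
    (hdrift : ∀ z, P[v (z + 1) | (hT z).measurableSpace]
        ≤ᵐ[P] fun ω => v z ω - δ z ω + b * (G z).indicator (fun _ => (1 : ℝ)) ω)
    (hsumint : ∀ z, Integrable (fun ω => ∑ k ∈ Finset.Ico (T z ω) (T (z + 1) ω), f k ω) P)
    (hfdrift : ∀ z,
      P[(fun ω => ∑ k ∈ Finset.Ico (T z ω) (T (z + 1) ω), f k ω) | (hT z).measurableSpace]
        ≤ᵐ[P] δ z) :
    ∀ Z : ℕ, 1 ≤ Z →
      (∫ ω, ∑ k ∈ Finset.range (T Z ω), f k ω ∂P)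
          ≤ (∫ ω, v 0 ω ∂P) + b * ∑ z ∈ Finset.range Z, (P (G z)).toReal ∧
        (∫ ω, v 0 ω ∂P) + b * ∑ z ∈ Finset.range Z, (P (G z)).toReal
          ≤ (∫ ω, v 0 ω ∂P) + b * Z :=
  stmt_9_general P ℱ T hT hT0 hTmono f v δ hvnonneg hvint b hb G hG hdrift hsumint hfdrift
end
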